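/- Let σ be the componentwise ReLU on ℝ^k with k ≥ 3. Let g(x) = z^{[n]} ∘ σ ∘ ··· ∘ σ ∘ z^{[1]}(x) be a residual network with blocks z^{[i]}(x) = W_{i,2} σ(W_{i,1} x) + x, W_{i,1}, W_{i,2} ∈ ℝ^{k × k}, and let λ = max_i max{‖W_{i,1}‖, ‖W_{i,2}‖}. Let δ > 0 and N ∈ ℕ, and suppose the quantized matrices satisfy ‖W_{i,1} − Q_{i,1}‖ ≤ 2δk√(k(k+3)) N^{−1/k}, ‖W_{i,2} − Q_{i,2}‖ ≤ 2δk√(k(k+3)) N^{−1/k}, ‖Q_{i,1}‖ ≤ 2δk√(k(k+3)) N^{−1/k} + λ, and ‖Q_{i,2}‖ ≤ 2δk√(k(k+3)) N^{−1/k} + λ for all i. Set A = 4δk√(k(k+3)) (δk√(k(k+3)) + λ) N^{−1/k} and B = (2δk√(k(k+3)) N^{−1/k} + λ)² + 1, and define the partial compositions y_0(x) = y_{0,Q}(x) = x, y_i(x) = z^{[i]} ∘ σ ∘ ··· ∘ σ ∘ z^{[1]}(x), y_{i,Q}(x) = z_Q^{[i]} ∘ σ ∘ ··· ∘ σ ∘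 z_Q^{[1]}(x) with z_Q^{[i]}(x) = Q_{i,2} σ(Q_{i,1} x) + x. Then for every X ∈ ℝ^k and every i ∈ {1, ..., n}, ‖y_i(X) − y_{i,Q}(X)‖ ≤ A ‖X‖ Σ_{j=0}^{i−1} (λ² + 1)^j B^{i−1−j}. -/

import Mathlib

open scoped RealInnerProductSpace BigOperators

/-- The matrix 2-norm (operator norm w.r.t. Euclidean norms), i.e. the largest
singular value. -/
noncomputable def opNorm {m n : ℕ} (A : Matrix (Fin m) (Fin n) ℝ) : ℝ :=
  ‖LinearMap.toContinuousLinearMap (Matrix.toEuclideanLin A)‖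

/-- The `j`-th column of a matrix, viewed as a vector of `ℝ^m` with the Euclidean norm. -/
noncomputable def matCol {m n : ℕ} (A : Matrix (Fin m) (Fin n) ℝ) (j : Fin n) :
    EuclideanSpace ℝ (Fin m) :=
  WithLp.toLp 2 (fun i => A i j)

/-- Frame variation `σ(F,p)` of the ordered family `v = e ∘ p`:
`∑_{i=1}^{N-1} ‖v i - v (i+1)‖`. -/
noncomputable def frameVar {E : Type*} [NormedAddCommGroup E] :
    {N : ℕ} → (Fin N → E) → ℝ
  | 0, _ => 0
  | n + 1, v => ∑ i : Fin n, ‖v i.castSucc - v i.succ‖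

/-- The midrise quantization alphabet `A^δ_K`. -/
def midrise (δ : ℝ) (K : ℕ) : Set ℝ :=
  {a | ∃ j : Fin (2 * K), a = (-(K : ℝ) + 1 / 2 + (j : ℕ)) * δ}

/-- Componentwise application of a scalar function to a Euclidean vector. -/
noncomputable def cwMap (σ : ℝ → ℝ) {d : ℕ} (v : EuclideanSpace ℝ (Fin d)) :
    EuclideanSpace ℝ (Fin d) :=
  WithLp.toLp 2 (fun j => σ (v j))

/-- `layerSeq σ m W X i` is the activated output after `i` layers:
`z_0 = X`, `z_{i+1} = σ.(W_i z_i)`. -/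
noncomputable def layerSeq (σ : ℝ → ℝ) (m : ℕ → ℕ)
    (W : (i : ℕ) → Matrix (Fin (m (i + 1))) (Fin (m i)) ℝ)
    (X : EuclideanSpace ℝ (Fin (m 0))) : (i : ℕ) → EuclideanSpace ℝ (Fin (m i))
  | 0 => X
  | i + 1 => cwMap σ (Matrix.toEuclideanLin (W i) (layerSeq σ m W X i))

/-- The `n`-layer feed-forward network `W_n σ(W_{n-1} σ(⋯ σ(W_1 X)⋯))`
(no activation after the last layer, no biases). -/
noncomputable def net (σ : ℝ → ℝ) (m : ℕ → ℕ)
    (W : (i : ℕ) → Matrix (Fin (m (i + 1))) (Fin (m i)) ℝ)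
    (n : ℕ) (X : EuclideanSpace ℝ (Fin (m 0))) : EuclideanSpace ℝ (Fin (m n)) :=
  match n with
  | 0 => X
  | k + 1 => Matrix.toEuclideanLin (W k) (layerSeq σ m W X k)

/-- Componentwise ReLU. -/
noncomputable def relu {d : ℕ} (v : EuclideanSpace ℝ (Fin d)) : EuclideanSpace ℝ (Fin d) :=
  cwMap (fun t => max 0 t) v

/-- A residual block `z(x) = W₂ σ(W₁ x) + x` with ReLU activation `σ`. -/
noncomputable def resBlock {k : ℕ} (W1 W2 : Matrix (Fin k) (Fin k) ℝ)
    (x : EuclideanSpace ℝ (Fin k)) : EuclideanSpace ℝ (Fin k) :=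
  Matrix.toEuclideanLin W2 (relu (Matrix.toEuclideanLin W1 x)) + x

/-- Partial compositions of a residual network:
`y_0 = X`, `y_i = z^{[i]} ∘ σ ∘ ⋯ ∘ σ ∘ z^{[1]} (X)`, where block `i` (1-based)
uses matrices `W1 (i-1)`, `W2 (i-1)`. -/
noncomputable def resPartial {k : ℕ} (W1 W2 : ℕ → Matrix (Fin k) (Fin k) ℝ)
    (X : EuclideanSpace ℝ (Fin k)) : ℕ → EuclideanSpace ℝ (Fin k)
  | 0 => X
  | 1 => resBlock (W1 0) (W2 0) X
  | i + 2 => resBlock (W1 (i + 1)) (W2 (i + 1)) (relu (resPartial W1 W2 X (i + 1)))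


section Aux

lemma opNorm_nonneg'' {m n : ℕ} (A : Matrix (Fin m) (Fin n) ℝ) : 0 ≤ opNorm A :=
  norm_nonneg _

lemma toEuclideanLin_le' {m n : ℕ} (A : Matrix (Fin m) (Fin n) ℝ)
    (x : EuclideanSpace ℝ (Fin n)) :
    ‖Matrix.toEuclideanLin A x‖ ≤ opNorm A * ‖x‖ := by
  simpa [opNorm] using (LinearMap.toContinuousLinearMap (Matrix.toEuclideanLin A)).le_opNorm x

lemma euclid_norm_le' {d : ℕ} (u v : EuclideanSpace ℝ (Fin d)) (h : ∀ i, |u i| ≤ |v i|) :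
    ‖u‖ ≤ ‖v‖ := by
  rw [EuclideanSpace.norm_eq, EuclideanSpace.norm_eq]
  apply Real.sqrt_le_sqrt
  apply Finset.sum_le_sum
  intro i _
  simp only [Real.norm_eq_abs]
  exact pow_le_pow_left₀ (abs_nonneg _) (h i) 2

lemma relu_lip' {d : ℕ} (u v : EuclideanSpace ℝ (Fin d)) : ‖relu u - relu v‖ ≤ ‖u - v‖ := by
  apply euclid_norm_le'
  intro i
  have h1 : (relu u - relu v) i = max 0 (u i) - max 0 (v i) := by simp [relu, cwMap]
  have h2 : (u - v) i = u i - v i := by simp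
  rw [h1, h2, max_comm 0 (u i), max_comm 0 (v i)]
  exact abs_max_sub_max_le_abs _ _ _

lemma relu_norm_le' {d : ℕ} (u : EuclideanSpace ℝ (Fin d)) : ‖relu u‖ ≤ ‖u‖ := by
  apply euclid_norm_le'
  intro i
  have h1 : relu u i = max 0 (u i) := rfl
  rw [h1, abs_of_nonneg (le_max_left 0 (u i))]
  exact max_le (abs_nonneg _) (le_abs_self _)

lemma resBlock_diff' {k : ℕ} (W1 W2 Q1 Q2 : Matrix (Fin k) (Fin k) ℝ)
    (x : EuclideanSpace ℝ (Fin k)) (a lam : ℝ)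
    (h1 : opNorm (W1 - Q1) ≤ a) (h2 : opNorm (W2 - Q2) ≤ a)
    (hW1 : opNorm W1 ≤ lam) (hQ2 : opNorm Q2 ≤ a + lam) :
    ‖resBlock W1 W2 x - resBlock Q1 Q2 x‖ ≤ (a * lam + (a + lam) * a) * ‖x‖ := by
  have ha : 0 ≤ a := le_trans (opNorm_nonneg'' _) h1
  have hal : 0 ≤ a + lam := le_trans (opNorm_nonneg'' _) hQ2
  have hlam : 0 ≤ lam := le_trans (opNorm_nonneg'' _) hW1
  set u := relu (Matrix.toEuclideanLin W1 x) with hu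
  set v := relu (Matrix.toEuclideanLin Q1 x) with hv
  have key : resBlock W1 W2 x - resBlock Q1 Q2 x =
      Matrix.toEuclideanLin (W2 - Q2) u + Matrix.toEuclideanLin Q2 (u - v) := by
    simp only [resBlock, map_sub, LinearMap.sub_apply, ← hu, ← hv]
    abel
  rw [key]
  have b1 : ‖Matrix.toEuclideanLin (W2 - Q2) u‖ ≤ a * (lam * ‖x‖) := by
    calc ‖Matrix.toEuclideanLin (W2 - Q2) u‖ ≤ opNorm (W2 - Q2) * ‖u‖ := toEuclideanLin_le' _ _
    _ ≤ a * (lam * ‖x‖) := by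
        apply mul_le_mul h2 ?_ (norm_nonneg _) ha
        calc ‖u‖ ≤ ‖Matrix.toEuclideanLin W1 x‖ := relu_norm_le' _
        _ ≤ opNorm W1 * ‖x‖ := toEuclideanLin_le' _ _
        _ ≤ lam * ‖x‖ := mul_le_mul_of_nonneg_right hW1 (norm_nonneg _)
  have b2 : ‖Matrix.toEuclideanLin Q2 (u - v)‖ ≤ (a + lam) * (a * ‖x‖) := by
    calc ‖Matrix.toEuclideanLin Q2 (u - v)‖ ≤ opNorm Q2 * ‖u - v‖ := toEuclideanLin_le' _ _
    _ ≤ (a + lam) * (a * ‖x‖) := by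
        apply mul_le_mul hQ2 ?_ (norm_nonneg _) hal
        calc ‖u - v‖ ≤ ‖Matrix.toEuclideanLin W1 x - Matrix.toEuclideanLin Q1 x‖ :=
              relu_lip' _ _
        _ = ‖Matrix.toEuclideanLin (W1 - Q1) x‖ := by rw [map_sub]; rfl
        _ ≤ opNorm (W1 - Q1) * ‖x‖ := toEuclideanLin_le' _ _
        _ ≤ a * ‖x‖ := mul_le_mul_of_nonneg_right h1 (norm_nonneg _)
  calc ‖Matrix.toEuclideanLin (W2 - Q2) u + Matrix.toEuclideanLin Q2 (u - v)‖
      ≤ ‖Matrix.toEuclideanLin (W2 - Q2) u‖ + ‖Matrix.toEuclideanLin Q2 (u - v)‖ :=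
        norm_add_le _ _
  _ ≤ a * (lam * ‖x‖) + (a + lam) * (a * ‖x‖) := add_le_add b1 b2
  _ = (a * lam + (a + lam) * a) * ‖x‖ := by ring

lemma resBlock_lip' {k : ℕ} (Q1 Q2 : Matrix (Fin k) (Fin k) ℝ)
    (u v : EuclideanSpace ℝ (Fin k)) (c : ℝ)
    (h1 : opNorm Q1 ≤ c) (h2 : opNorm Q2 ≤ c) :
    ‖resBlock Q1 Q2 u - resBlock Q1 Q2 v‖ ≤ (c ^ 2 + 1) * ‖u - v‖ := by
  have hc : 0 ≤ c := le_trans (opNorm_nonneg'' _) h1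
  have key : resBlock Q1 Q2 u - resBlock Q1 Q2 v =
      Matrix.toEuclideanLin Q2 (relu (Matrix.toEuclideanLin Q1 u)
        - relu (Matrix.toEuclideanLin Q1 v)) + (u - v) := by
    simp only [resBlock, map_sub]
    abel
  rw [key]
  have b1 : ‖Matrix.toEuclideanLin Q2 (relu (Matrix.toEuclideanLin Q1 u)
      - relu (Matrix.toEuclideanLin Q1 v))‖ ≤ c * (c * ‖u - v‖) := by
    calc _ ≤ opNorm Q2 * ‖relu (Matrix.toEuclideanLin Q1 u)
        - relu (Matrix.toEuclideanLin Q1 v)‖ := toEuclideanLin_le' _ _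
    _ ≤ c * (c * ‖u - v‖) := by
        apply mul_le_mul h2 ?_ (norm_nonneg _) hc
        calc ‖relu (Matrix.toEuclideanLin Q1 u) - relu (Matrix.toEuclideanLin Q1 v)‖
            ≤ ‖Matrix.toEuclideanLin Q1 u - Matrix.toEuclideanLin Q1 v‖ := relu_lip' _ _
        _ = ‖Matrix.toEuclideanLin Q1 (u - v)‖ := by rw [map_sub]
        _ ≤ opNorm Q1 * ‖u - v‖ := toEuclideanLin_le' _ _
        _ ≤ c * ‖u - v‖ := mul_le_mul_of_nonneg_right h1 (norm_nonneg _)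
  calc _ ≤ ‖Matrix.toEuclideanLin Q2 (relu (Matrix.toEuclideanLin Q1 u)
        - relu (Matrix.toEuclideanLin Q1 v))‖ + ‖u - v‖ := norm_add_le _ _
  _ ≤ c * (c * ‖u - v‖) + ‖u - v‖ := add_le_add_left b1 _
  _ = (c ^ 2 + 1) * ‖u - v‖ := by ring

lemma resBlock_growth' {k : ℕ} (W1 W2 : Matrix (Fin k) (Fin k) ℝ)
    (x : EuclideanSpace ℝ (Fin k)) (lam : ℝ)
    (h1 : opNorm W1 ≤ lam) (h2 : opNorm W2 ≤ lam) :
    ‖resBlock W1 W2 x‖ ≤ (lam ^ 2 + 1) * ‖x‖ := by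
  have hlam : 0 ≤ lam := le_trans (opNorm_nonneg'' _) h1
  have b1 : ‖Matrix.toEuclideanLin W2 (relu (Matrix.toEuclideanLin W1 x))‖
      ≤ lam * (lam * ‖x‖) := by
    calc _ ≤ opNorm W2 * ‖relu (Matrix.toEuclideanLin W1 x)‖ := toEuclideanLin_le' _ _
    _ ≤ lam * (lam * ‖x‖) := by
        apply mul_le_mul h2 ?_ (norm_nonneg _) hlam
        calc ‖relu (Matrix.toEuclideanLin W1 x)‖ ≤ ‖Matrix.toEuclideanLin W1 x‖ :=
              relu_norm_le' _
        _ ≤ opNorm W1 * ‖x‖ := toEuclideanLin_le' _ _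
        _ ≤ lam * ‖x‖ := mul_le_mul_of_nonneg_right h1 (norm_nonneg _)
  calc ‖resBlock W1 W2 x‖
      ≤ ‖Matrix.toEuclideanLin W2 (relu (Matrix.toEuclideanLin W1 x))‖ + ‖x‖ := norm_add_le _ _
  _ ≤ lam * (lam * ‖x‖) + ‖x‖ := add_le_add_left b1 _
  _ = (lam ^ 2 + 1) * ‖x‖ := by ring

lemma resPartial_growth' {k : ℕ} (W1 W2 : ℕ → Matrix (Fin k) (Fin k) ℝ) (lam : ℝ)
    (X : EuclideanSpace ℝ (Fin k)) :
    ∀ i, (∀ j, j < i → opNorm (W1 j) ≤ lam ∧ opNorm (W2 j) ≤ lam) →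
      ‖resPartial W1 W2 X i‖ ≤ (lam ^ 2 + 1) ^ i * ‖X‖ := by
  intro i
  induction i with
  | zero => intro _; simp [resPartial]
  | succ m ih =>
    intro h
    match m with
    | 0 =>
      have := resBlock_growth' (W1 0) (W2 0) X lam (h 0 (by omega)).1 (h 0 (by omega)).2
      simpa [resPartial] using this
    | p + 1 =>
      have hrec : ‖resPartial W1 W2 X (p + 1)‖ ≤ (lam ^ 2 + 1) ^ (p + 1) * ‖X‖ :=
        ih (fun j hj => h j (by omega))
      have hb : ‖resBlock (W1 (p + 1)) (W2 (p + 1)) (relu (resPartial W1 W2 X (p + 1)))‖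
          ≤ (lam ^ 2 + 1) * ‖relu (resPartial W1 W2 X (p + 1))‖ :=
        resBlock_growth' _ _ _ lam (h (p + 1) (by omega)).1 (h (p + 1) (by omega)).2
      have hsq : (0:ℝ) ≤ lam ^ 2 + 1 := by positivity
      calc ‖resPartial W1 W2 X (p + 2)‖
          = ‖resBlock (W1 (p + 1)) (W2 (p + 1)) (relu (resPartial W1 W2 X (p + 1)))‖ := rfl
      _ ≤ (lam ^ 2 + 1) * ‖relu (resPartial W1 W2 X (p + 1))‖ := hb
      _ ≤ (lam ^ 2 + 1) * ((lam ^ 2 + 1) ^ (p + 1) * ‖X‖) := by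
          apply mul_le_mul_of_nonneg_left _ hsq
          exact le_trans (relu_norm_le' _) hrec
      _ = (lam ^ 2 + 1) ^ (p + 2) * ‖X‖ := by ring

end Aux

lemma main_induction' {k : ℕ} (W1 W2 Q1 Q2 : ℕ → Matrix (Fin k) (Fin k) ℝ)
    (lam a : ℝ) (X : EuclideanSpace ℝ (Fin k)) (n : ℕ)
    (hW1le : ∀ j, j < n → opNorm (W1 j) ≤ lam)
    (hW2le : ∀ j, j < n → opNorm (W2 j) ≤ lam)
    (hd1 : ∀ j, j < n → opNorm (W1 j - Q1 j) ≤ a)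
    (hd2 : ∀ j, j < n → opNorm (W2 j - Q2 j) ≤ a)
    (hq1 : ∀ j, j < n → opNorm (Q1 j) ≤ a + lam)
    (hq2 : ∀ j, j < n → opNorm (Q2 j) ≤ a + lam) :
    ∀ m, m + 1 ≤ n →
      ‖resPartial W1 W2 X (m + 1) - resPartial Q1 Q2 X (m + 1)‖ ≤
        (a * lam + (a + lam) * a) * ‖X‖ *
          ∑ j ∈ Finset.range (m + 1), (lam ^ 2 + 1) ^ j * ((a + lam) ^ 2 + 1) ^ (m - j) := by
  intro m
  induction m with
  | zero =>
    intro h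
    have hb := resBlock_diff' (W1 0) (W2 0) (Q1 0) (Q2 0) X a lam
      (hd1 0 h) (hd2 0 h) (hW1le 0 h) (hq2 0 h)
    simpa [Finset.sum_range_one, resPartial] using hb
  | succ p ih =>
    intro h
    have hp1 : p + 1 ≤ n := by omega
    have hplt : p + 1 < n := by omega
    have ihb := ih hp1
    set C := a * lam + (a + lam) * a with hC
    set B := (a + lam) ^ 2 + 1 with hB
    have hC0 : 0 ≤ C := by
      have ha0 : 0 ≤ a := le_trans (opNorm_nonneg'' _) (hd1 0 (by omega))
      have hl0 : 0 ≤ lam := le_trans (opNorm_nonneg'' _) (hW1le 0 (by omega))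
      rw [hC]; positivity
    have hB0 : (0:ℝ) ≤ B := by rw [hB]; positivity
    set u := relu (resPartial W1 W2 X (p + 1)) with hu
    set v := relu (resPartial Q1 Q2 X (p + 1)) with hv
    have e1 : resPartial W1 W2 X (p + 2) = resBlock (W1 (p + 1)) (W2 (p + 1)) u := rfl
    have e2 : resPartial Q1 Q2 X (p + 2) = resBlock (Q1 (p + 1)) (Q2 (p + 1)) v := rfl
    have tri : ‖resPartial W1 W2 X (p + 2) - resPartial Q1 Q2 X (p + 2)‖ ≤
        ‖resBlock (W1 (p + 1)) (W2 (p + 1)) u - resBlock (Q1 (p + 1)) (Q2 (p + 1)) u‖ +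
        ‖resBlock (Q1 (p + 1)) (Q2 (p + 1)) u - resBlock (Q1 (p + 1)) (Q2 (p + 1)) v‖ := by
      rw [e1, e2]
      have := dist_triangle (resBlock (W1 (p + 1)) (W2 (p + 1)) u)
        (resBlock (Q1 (p + 1)) (Q2 (p + 1)) u) (resBlock (Q1 (p + 1)) (Q2 (p + 1)) v)
      simpa [dist_eq_norm] using this
    have growth : ‖resPartial W1 W2 X (p + 1)‖ ≤ (lam ^ 2 + 1) ^ (p + 1) * ‖X‖ :=
      resPartial_growth' W1 W2 lam X (p + 1)
        (fun j hj => ⟨hW1le j (by omega), hW2le j (by omega)⟩)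
    have t1 : ‖resBlock (W1 (p + 1)) (W2 (p + 1)) u - resBlock (Q1 (p + 1)) (Q2 (p + 1)) u‖ ≤
        C * ((lam ^ 2 + 1) ^ (p + 1) * ‖X‖) := by
      calc _ ≤ C * ‖u‖ := resBlock_diff' _ _ _ _ u a lam (hd1 _ hplt) (hd2 _ hplt)
            (hW1le _ hplt) (hq2 _ hplt)
      _ ≤ C * ((lam ^ 2 + 1) ^ (p + 1) * ‖X‖) := by
          apply mul_le_mul_of_nonneg_left _ hC0
          exact le_trans (relu_norm_le' _) growth
    have t2 : ‖resBlock (Q1 (p + 1)) (Q2 (p + 1)) u - resBlock (Q1 (p + 1)) (Q2 (p + 1)) v‖ ≤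
        B * (C * ‖X‖ * ∑ j ∈ Finset.range (p + 1),
          (lam ^ 2 + 1) ^ j * B ^ (p - j)) := by
      calc _ ≤ B * ‖u - v‖ := resBlock_lip' _ _ u v (a + lam) (hq1 _ hplt) (hq2 _ hplt)
      _ ≤ B * (C * ‖X‖ * ∑ j ∈ Finset.range (p + 1), (lam ^ 2 + 1) ^ j * B ^ (p - j)) := by
          apply mul_le_mul_of_nonneg_left _ hB0
          exact le_trans (relu_lip' _ _) ihb
    have sumid : ∑ j ∈ Finset.range (p + 2), (lam ^ 2 + 1) ^ j * B ^ (p + 1 - j) =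
        (lam ^ 2 + 1) ^ (p + 1) +
          B * ∑ j ∈ Finset.range (p + 1), (lam ^ 2 + 1) ^ j * B ^ (p - j) := by
      rw [Finset.sum_range_succ, Finset.mul_sum]
      have h1 : ∀ j ∈ Finset.range (p + 1), (lam ^ 2 + 1) ^ j * B ^ (p + 1 - j) =
          B * ((lam ^ 2 + 1) ^ j * B ^ (p - j)) := by
        intro j hj
        have hjle : j ≤ p := by
          have := Finset.mem_range.mp hj; omega
        have : p + 1 - j = (p - j) + 1 := by omega
        rw [this, pow_succ]; ring
      rw [Finset.sum_congr rfl h1]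
      simp [Nat.sub_self]
      ring
    calc ‖resPartial W1 W2 X (p + 2) - resPartial Q1 Q2 X (p + 2)‖
        ≤ C * ((lam ^ 2 + 1) ^ (p + 1) * ‖X‖) +
          B * (C * ‖X‖ * ∑ j ∈ Finset.range (p + 1), (lam ^ 2 + 1) ^ j * B ^ (p - j)) :=
          le_trans tri (add_le_add t1 t2)
    _ = C * ‖X‖ * ((lam ^ 2 + 1) ^ (p + 1) +
          B * ∑ j ∈ Finset.range (p + 1), (lam ^ 2 + 1) ^ j * B ^ (p - j)) := by ring
    _ = C * ‖X‖ * ∑ j ∈ Finset.range (p + 2), (lam ^ 2 + 1) ^ j * B ^ (p + 1 - j) := by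
          rw [sumid]
/-- the inductive estimate (13) in the proof of Theorem 6.3
for the partial compositions of a residual network and its quantization; block
`i` (1-based) uses the matrices indexed `i - 1`. -/
theorem stmt14 {k : ℕ} (hk : 3 ≤ k) (n : ℕ) (hn : 0 < n)
    (W1 W2 Q1 Q2 : ℕ → Matrix (Fin k) (Fin k) ℝ) (lam : ℝ)
    (hlam : lam = Finset.sup' (Finset.range n) (Finset.nonempty_range_iff.mpr hn.ne')
      (fun i => max (opNorm (W1 i)) (opNorm (W2 i))))
    (δ : ℝ) (hδ : 0 < δ) (N : ℕ)
    (hd1 : ∀ i < n, opNorm (W1 i - Q1 i) ≤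
      2 * δ * k * Real.sqrt ((k : ℝ) * (k + 3)) * (N : ℝ) ^ (-(1 / (k : ℝ))))
    (hd2 : ∀ i < n, opNorm (W2 i - Q2 i) ≤
      2 * δ * k * Real.sqrt ((k : ℝ) * (k + 3)) * (N : ℝ) ^ (-(1 / (k : ℝ))))
    (hq1 : ∀ i < n, opNorm (Q1 i) ≤
      2 * δ * k * Real.sqrt ((k : ℝ) * (k + 3)) * (N : ℝ) ^ (-(1 / (k : ℝ))) + lam)
    (hq2 : ∀ i < n, opNorm (Q2 i) ≤
      2 * δ * k * Real.sqrt ((k : ℝ) * (k + 3)) * (N : ℝ) ^ (-(1 / (k : ℝ))) + lam)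
    (X : EuclideanSpace ℝ (Fin k)) :
    ∀ i, 1 ≤ i → i ≤ n →
      ‖resPartial W1 W2 X i - resPartial Q1 Q2 X i‖ ≤
        4 * δ * k * Real.sqrt ((k : ℝ) * (k + 3)) *
            (δ * k * Real.sqrt ((k : ℝ) * (k + 3)) + lam) * (N : ℝ) ^ (-(1 / (k : ℝ))) * ‖X‖ *
          ∑ j ∈ Finset.range i, (lam ^ 2 + 1) ^ j *
            ((2 * δ * k * Real.sqrt ((k : ℝ) * (k + 3)) * (N : ℝ) ^ (-(1 / (k : ℝ))) + lam) ^ 2 + 1)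
              ^ (i - 1 - j) := by
  intro i hi1 hin
  set s : ℝ := Real.sqrt ((k : ℝ) * (k + 3)) with hs_def
  set r : ℝ := (N : ℝ) ^ (-(1 / (k : ℝ))) with hr_def
  have hk0 : (0:ℝ) < (k : ℝ) := by
    have : (3:ℝ) ≤ (k : ℝ) := by exact_mod_cast hk
    linarith
  have hs0 : 0 ≤ s := Real.sqrt_nonneg _
  have hr0 : 0 ≤ r := Real.rpow_nonneg (Nat.cast_nonneg N) _
  have hr1 : r ≤ 1 := by
    rcases Nat.eq_zero_or_pos N with hN | hN
    · subst hN
      rw [hr_def, Nat.cast_zero, Real.zero_rpow]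
      · norm_num
      · have : 0 < 1 / (k : ℝ) := by positivity
        intro hcon
        rw [neg_eq_zero] at hcon
        linarith
    · apply Real.rpow_le_one_of_one_le_of_nonpos
      · exact_mod_cast hN
      · have : 0 ≤ 1 / (k : ℝ) := by positivity
        linarith
  have hW1le : ∀ j, j < n → opNorm (W1 j) ≤ lam := by
    intro j hj
    rw [hlam]
    exact le_trans (le_max_left _ _)
      (Finset.le_sup' (fun i => max (opNorm (W1 i)) (opNorm (W2 i)))
        (Finset.mem_range.mpr hj))
  have hW2le : ∀ j, j < n → opNorm (W2 j) ≤ lam := by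
    intro j hj
    rw [hlam]
    exact le_trans (le_max_right _ _)
      (Finset.le_sup' (fun i => max (opNorm (W1 i)) (opNorm (W2 i)))
        (Finset.mem_range.mpr hj))
  have hlam0 : 0 ≤ lam := le_trans (opNorm_nonneg'' _) (hW1le 0 hn)
  obtain ⟨m, rfl⟩ : ∃ m, i = m + 1 := ⟨i - 1, by omega⟩
  have key := main_induction' W1 W2 Q1 Q2 lam (2 * δ * k * s * r) X n hW1le hW2le
    (fun j hj => hd1 j hj) (fun j hj => hd2 j hj)
    (fun j hj => hq1 j hj) (fun j hj => hq2 j hj) m hin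
  have hCAc : 2 * δ * k * s * r * lam + (2 * δ * k * s * r + lam) * (2 * δ * k * s * r) ≤
      4 * δ * k * s * (δ * k * s + lam) * r := by
    nlinarith [mul_nonneg (mul_nonneg (sq_nonneg (δ * (k:ℝ) * s)) hr0)
      (sub_nonneg.mpr hr1), mul_nonneg (mul_nonneg hδ.le hk0.le) hs0,
      mul_nonneg (mul_nonneg (mul_nonneg hδ.le hk0.le) hs0) (mul_nonneg hr0 hlam0)]
  have hsum0 : 0 ≤ ∑ j ∈ Finset.range (m + 1),
      (lam ^ 2 + 1) ^ j * ((2 * δ * k * s * r + lam) ^ 2 + 1) ^ (m - j) := by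
    apply Finset.sum_nonneg
    intro j _
    positivity
  have hfin : (2 * δ * k * s * r * lam + (2 * δ * k * s * r + lam) * (2 * δ * k * s * r))
      * ‖X‖ * ∑ j ∈ Finset.range (m + 1),
        (lam ^ 2 + 1) ^ j * ((2 * δ * k * s * r + lam) ^ 2 + 1) ^ (m - j) ≤
      4 * δ * k * s * (δ * k * s + lam) * r * ‖X‖ * ∑ j ∈ Finset.range (m + 1),
        (lam ^ 2 + 1) ^ j * ((2 * δ * k * s * r + lam) ^ 2 + 1) ^ (m - j) :=
    mul_le_mul_of_nonneg_right
      (mul_le_mul_of_nonneg_right hCAc (norm_nonneg X)) hsum0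
  have hgoal := le_trans key hfin
  simpa [Nat.add_sub_cancel] using hgoal
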